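/- arXiv:1407.6218 — 3 statements merged into one kernel-verified Lean document; each statement's English description precedes it below -/
import Mathlib

section
/- Let h be a Γ-equivariant continuous hermitian metric. Then for every compact subset C ⊆ G there exists a constant M > 0, depending only on C, such that h(gc)(v, v) ≤ M · h(g)(v, v) for all c ∈ C, all g ∈ G and all v ∈ V. -/
open MeasureTheory

/-!
Cocompactness moves every `g` by some `γ ∈ Γ` into a fixed compact set `D`, and equivariance
transports the inequality at `(g, c, v)` to `(γ g, c, χ γ v)`. Both sides are quadratic in `v`,
so it suffices to bound the continuous ratio `h (x c) (u, u) / h x (u, u)` on the compact set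
`D × C × {‖u‖ = 1}`, where the denominator is positive.
-/

/-- A `Γ`-equivariant continuous hermitian metric on the trivial `V`-bundle over `G`:
a continuous assignment `g ↦ h g` of a hermitian inner product on `V`
(conjugate-linear in the first variable, linear in the second) satisfying
`h (γ * g) (χ γ v) (χ γ w) = h g v w`. -/
def IsEquivariantHermitianMetric {G V : Type*} [Group G] [TopologicalSpace G]
    [NormedAddCommGroup V] [NormedSpace ℂ V]
    (Γ : Subgroup G) (χ : Γ →* (V →ₗ[ℂ] V)ˣ) (h : G → V → V → ℂ) : Prop :=
  Continuous (fun p : G × V × V => h p.1 p.2.1 p.2.2) ∧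
  (∀ (g : G) (v w w' : V), h g v (w + w') = h g v w + h g v w') ∧
  (∀ (g : G) (a : ℂ) (v w : V), h g v (a • w) = a * h g v w) ∧
  (∀ (g : G) (v w : V), h g w v = (starRingEnd ℂ) (h g v w)) ∧
  (∀ (g : G) (v : V), v ≠ 0 → 0 < (h g v v).re) ∧
  (∀ (γ : Γ) (g : G) (v w : V),
    h ((γ : G) * g) ((χ γ : V →ₗ[ℂ] V) v) ((χ γ : V →ₗ[ℂ] V) w) = h g v w)

theorem IsCompact.exists_pos_forall_le_mul {X : Type*} [TopologicalSpace X] {K : Set X}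
    (hK : IsCompact K) {f g : X → ℝ} (hf : ContinuousOn f K) (hg : ContinuousOn g K)
    (hg_pos : ∀ x ∈ K, 0 < g x) : ∃ M : ℝ, 0 < M ∧ ∀ x ∈ K, f x ≤ M * g x := by
  obtain ⟨B, hB⟩ := (hK.image_of_continuousOn
    (hf.div hg fun x hx => (hg_pos x hx).ne')).isBounded.bddAbove
  refine ⟨max B 1, by positivity, fun x hx => ?_⟩
  have hratio : f x / g x ≤ max B 1 := (hB ⟨x, hx, rfl⟩).trans (le_max_left B 1)
  exact (div_le_iff₀ (hg_pos x hx)).mp hratio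

theorem IsCompact.exists_pos_forall_le_mul_of_homogeneous {𝕜 X V : Type*} [RCLike 𝕜]
    [TopologicalSpace X] [NormedAddCommGroup V] [NormedSpace 𝕜 V] [FiniteDimensional 𝕜 V]
    {K : Set X} (hK : IsCompact K) {q₁ q₂ : X → V → ℝ}
    (hq₁ : Continuous (Function.uncurry q₁)) (hq₂ : Continuous (Function.uncurry q₂))
    (hq₁_smul : ∀ x (a : 𝕜) v, q₁ x (a • v) = ‖a‖ ^ 2 * q₁ x v)
    (hq₂_smul : ∀ x (a : 𝕜) v, q₂ x (a • v) = ‖a‖ ^ 2 * q₂ x v)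
    (hq₂_pos : ∀ x ∈ K, ∀ v, v ≠ 0 → 0 < q₂ x v) :
    ∃ M : ℝ, 0 < M ∧ ∀ x ∈ K, ∀ v, q₁ x v ≤ M * q₂ x v := by
  have := FiniteDimensional.proper_rclike 𝕜 V
  obtain ⟨M, hM, hle⟩ := (hK.prod (isCompact_sphere (0 : V) 1)).exists_pos_forall_le_mul
    hq₁.continuousOn hq₂.continuousOn fun p hp =>
      hq₂_pos p.1 hp.1 p.2 (ne_zero_of_mem_unit_sphere ⟨p.2, hp.2⟩)
  refine ⟨M, hM, fun x hx v => ?_⟩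
  rcases eq_or_ne v 0 with rfl | hv
  · have hzero : ∀ q : X → V → ℝ, (∀ (a : 𝕜) v, q x (a • v) = ‖a‖ ^ 2 * q x v) → q x 0 = 0 :=
      fun q hq => by simpa using hq 0 0
    simp [hzero q₁ (hq₁_smul x), hzero q₂ (hq₂_smul x)]
  have hu : (‖v‖⁻¹ : 𝕜) • v ∈ Metric.sphere (0 : V) 1 := by
    simpa using norm_smul_inv_norm (𝕜 := 𝕜) hv
  have hv_eq : v = (‖v‖ : 𝕜) • (‖v‖⁻¹ : 𝕜) • v :=
    (smul_inv_smul₀ (RCLike.ofReal_ne_zero.mpr (norm_ne_zero_iff.mpr hv)) v).symm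
  have hunit := hle (x, _) ⟨hx, hu⟩
  simp only [Function.uncurry_apply_pair] at hunit
  rw [hv_eq, hq₁_smul, hq₂_smul, mul_left_comm M]
  gcongr

namespace IsEquivariantHermitianMetric

variable {G V : Type*} [Group G] [TopologicalSpace G] [NormedAddCommGroup V] [NormedSpace ℂ V]
  {Γ : Subgroup G} {χ : Γ →* (V →ₗ[ℂ] V)ˣ} {h : G → V → V → ℂ}

theorem continuous_re_self (hh : IsEquivariantHermitianMetric Γ χ h) :
    Continuous fun p : G × V => (h p.1 p.2 p.2).re :=
  Complex.continuous_re.comp <|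
    hh.1.comp (continuous_fst.prodMk (continuous_snd.prodMk continuous_snd))

theorem re_smul_self (hh : IsEquivariantHermitianMetric Γ χ h) (g : G) (a : ℂ) (v : V) :
    (h g (a • v) (a • v)).re = ‖a‖ ^ 2 * (h g v v).re := by
  obtain ⟨-, -, hsmul, hsymm, -⟩ := hh
  have hconj : h g (a • v) v = (starRingEnd ℂ) a * h g v v := by
    rw [hsymm g v, hsmul, map_mul, ← hsymm]
  rw [hsmul, hconj, ← mul_assoc, Complex.mul_conj, Complex.normSq_eq_norm_sq,
    Complex.re_ofReal_mul]

theorem re_self_pos (hh : IsEquivariantHermitianMetric Γ χ h) (g : G) {v : V} (hv : v ≠ 0) :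
    0 < (h g v v).re :=
  hh.2.2.2.2.1 g v hv

theorem apply_map_map (hh : IsEquivariantHermitianMetric Γ χ h) (γ : Γ) (g : G) (v w : V) :
    h ((γ : G) * g) ((χ γ : V →ₗ[ℂ] V) v) ((χ γ : V →ₗ[ℂ] V) w) = h g v w :=
  hh.2.2.2.2.2 γ g v w

end IsEquivariantHermitianMetric

theorem exists_uniform_bound_on_compact_of_equivariant_metric_general
    {G V : Type*} [Group G] [TopologicalSpace G] [IsTopologicalGroup G]
    [NormedAddCommGroup V] [NormedSpace ℂ V] [FiniteDimensional ℂ V]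
    (Γ : Subgroup G)
    (hcocompact : ∃ C : Set G, IsCompact C ∧ ∀ g : G, ∃ γ ∈ Γ, γ * g ∈ C)
    (χ : Γ →* (V →ₗ[ℂ] V)ˣ)
    (h : G → V → V → ℂ) (hh : IsEquivariantHermitianMetric Γ χ h) :
    ∀ C : Set G, IsCompact C → ∃ M : ℝ, 0 < M ∧
      ∀ c ∈ C, ∀ (g : G) (v : V), (h (g * c) v v).re ≤ M * (h g v v).re := by
  intro C hC
  obtain ⟨D, hD, hD_fund⟩ := hcocompact
  obtain ⟨M, hM, hle⟩ := (hD.prod hC).exists_pos_forall_le_mul_of_homogeneous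
    (q₁ := fun p v => (h (p.1 * p.2) v v).re) (q₂ := fun p v => (h p.1 v v).re)
    (hh.continuous_re_self.comp ((continuous_fst.comp continuous_fst).mul
      (continuous_snd.comp continuous_fst) |>.prodMk continuous_snd))
    (hh.continuous_re_self.comp ((continuous_fst.comp continuous_fst).prodMk continuous_snd))
    (fun p => hh.re_smul_self _) (fun p => hh.re_smul_self _)
    (fun p _ _ hv => hh.re_self_pos _ hv)
  refine ⟨M, hM, fun c hc g v => ?_⟩
  obtain ⟨γ, hγ, hγg⟩ := hD_fund g
  simpa only [mul_assoc, hh.apply_map_map ⟨γ, hγ⟩] using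
    hle (γ * g, c) ⟨hγg, hc⟩ ((χ ⟨γ, hγ⟩ : V →ₗ[ℂ] V) v)

/-- For a `Γ`-equivariant continuous hermitian metric `h` and every
compact `C ⊆ G` there is a constant `M > 0` with
`h (g * c) (v, v) ≤ M * h g (v, v)` for all `c ∈ C`, `g ∈ G`, `v ∈ V`. -/
theorem exists_uniform_bound_on_compact_of_equivariant_metric
    {G V : Type*} [Group G] [TopologicalSpace G] [IsTopologicalGroup G]
    [LocallyCompactSpace G] [T2Space G] [SecondCountableTopology G]
    [MeasurableSpace G] [BorelSpace G] (μ : Measure G)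
    [μ.IsHaarMeasure] [μ.IsMulRightInvariant]
    [NormedAddCommGroup V] [NormedSpace ℂ V] [FiniteDimensional ℂ V] [Nontrivial V]
    (Γ : Subgroup G) [DiscreteTopology Γ]
    (hcocompact : ∃ C : Set G, IsCompact C ∧ ∀ g : G, ∃ γ ∈ Γ, γ * g ∈ C)
    (χ : Γ →* (V →ₗ[ℂ] V)ˣ)
    (h : G → V → V → ℂ) (hh : IsEquivariantHermitianMetric Γ χ h) :
    ∀ C : Set G, IsCompact C → ∃ M : ℝ, 0 < M ∧
      ∀ c ∈ C, ∀ (g : G) (v : V), (h (g * c) v v).re ≤ M * (h g v v).re :=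
  exists_uniform_bound_on_compact_of_equivariant_metric_general Γ hcocompact χ h hh
end

section
/- Let h be a Γ-equivariant continuous hermitian metric and let F ⊆ G be a measurable fundamental domain for the left translation action of Γ on G. Then there exists a continuous function ψ : G → ℝ such that for every g ∈ G and every continuous Γ-equivariant function f : G → V one has ∫_F h(x)(f(xg), f(xg)) dμ(x) ≤ ψ(g) · ∫_F h(x)(f(x), f(x)) dμ(x). In particular, the operator norm of the right translation operator R(g) : f ↦ (x ↦ f(xg)) on the L²-space of Γ-equivariant functions is uniformly bounded on every compact subset of G. -/
/-!
Let `C` be a compact set meeting every `Γ`-orbit and `S` the unit sphere of `V`. On the compact set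
`C × S` the ratio `h x (v, v) / h (x g) (v, v)` is bounded by its supremum `ψ g`, which depends
continuously on `g`. Both terms are homogeneous of degree two in `v`, so
`h x (v, v) ≤ ψ g * h (x g) (v, v)` for all `v` and `x ∈ C`, and then for all `x` by
`Γ`-equivariance of `h`. For equivariant `f` both integrands are `Γ`-invariant, hence bounded and
integrable over `F` (which has finite measure since `C` covers it up to `Γ`), and right translation
by `g` maps `F` to another fundamental domain; integrating the pointwise bound over `F` concludes.
-/

open MeasureTheory Pointwise

section Comparison

variable {𝕜 X P V : Type*} [RCLike 𝕜] [TopologicalSpace X] [TopologicalSpace P]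
  [NormedAddCommGroup V] [NormedSpace 𝕜 V] [ProperSpace V]

theorem IsCompact.exists_continuous_forall_le_mul {C : Set X} (hC : IsCompact C)
    {Q : X → V → ℝ} {R : P → X → V → ℝ}
    (hQ : Continuous fun y : X × V => Q y.1 y.2)
    (hR : Continuous fun z : P × X × V => R z.1 z.2.1 z.2.2)
    (hQ_smul : ∀ x (c : 𝕜) v, Q x (c • v) = ‖c‖ ^ 2 * Q x v)
    (hR_smul : ∀ p x (c : 𝕜) v, R p x (c • v) = ‖c‖ ^ 2 * R p x v)
    (hR_pos : ∀ p x v, v ≠ 0 → 0 < R p x v) :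
    ∃ ψ : P → ℝ, Continuous ψ ∧ ∀ p, ∀ x ∈ C, ∀ v, Q x v ≤ ψ p * R p x v := by
  set S := Metric.sphere (0 : V) 1
  have hS_ne (u : S) : (u : V) ≠ 0 := ne_zero_of_mem_unit_sphere u
  let ratio : P → X × S → ℝ := fun p y => Q y.1 y.2 / R p y.1 y.2
  have hratio : Continuous fun z : P × (X × S) => ratio z.1 z.2 := by
    refine Continuous.div (hQ.comp (f := fun z : P × (X × S) => (z.2.1, (z.2.2 : V)))
      (by fun_prop)) (hR.comp (f := fun z : P × (X × S) => (z.1, z.2.1, (z.2.2 : V)))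
      (by fun_prop)) fun z => (hR_pos _ _ _ (hS_ne z.2.2)).ne'
  have hK : IsCompact (C ×ˢ (Set.univ : Set S)) := hC.prod isCompact_univ
  refine ⟨fun p => sSup (ratio p '' (C ×ˢ Set.univ)), hK.continuous_sSup hratio, ?_⟩
  intro p x hx v
  have on_sphere (u : S) : Q x u ≤ sSup (ratio p '' (C ×ˢ Set.univ)) * R p x u := by
    rw [← div_le_iff₀ (hR_pos _ _ _ (hS_ne u))]
    exact le_csSup (hK.image (hratio.comp (Continuous.prodMk_right p))).bddAbove
      ⟨(x, u), ⟨hx, trivial⟩, rfl⟩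
  rcases eq_or_ne v 0 with rfl | hv
  · have hQ0 : Q x 0 = 0 := by simpa using hQ_smul x 0 0
    have hR0 : R p x 0 = 0 := by simpa using hR_smul p x 0 0
    simp [hQ0, hR0]
  · set u : S := ⟨(‖v‖⁻¹ : 𝕜) • v, mem_sphere_zero_iff_norm.mpr (norm_smul_inv_norm hv)⟩
    have hvu : v = (‖v‖ : 𝕜) • (u : V) := by
      simp [u, smul_smul, norm_ne_zero_iff.mpr hv]
    rw [hvu, hQ_smul, hR_smul, mul_left_comm]
    exact mul_le_mul_of_nonneg_left (on_sphere u) (sq_nonneg _)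

end Comparison

section Invariant

variable {Γ α E : Type*} [Group Γ] [MulAction Γ α] {C : Set α}

theorem IsCompact.exists_bound_of_smul_invariant [TopologicalSpace α] [NormedAddCommGroup E]
    (hC : IsCompact C) (hC_cover : ∀ x, ∃ γ : Γ, γ • x ∈ C) {f : α → E} (hf : Continuous f)
    (hf_inv : ∀ (γ : Γ) x, f (γ • x) = f x) : ∃ M, ∀ x, ‖f x‖ ≤ M := by
  obtain ⟨M, hM⟩ := hC.exists_bound_of_continuousOn hf.continuousOn
  refine ⟨M, fun x => ?_⟩
  obtain ⟨γ, hγ⟩ := hC_cover x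
  exact hf_inv γ x ▸ hM _ hγ

namespace MeasureTheory

variable [MeasurableSpace α] {μ : Measure α} {s : Set α}

theorem IsFundamentalDomain.measure_le_of_forall_exists_smul_mem [MeasurableConstSMul Γ α]
    [SMulInvariantMeasure Γ α μ] [Countable Γ] (hs : IsFundamentalDomain Γ s μ)
    (hC_cover : ∀ x, ∃ γ : Γ, γ • x ∈ C) : μ s ≤ μ C := by
  have hsub : s ⊆ ⋃ γ : Γ, γ • C ∩ s := fun x hx => by
    obtain ⟨γ, hγ⟩ := hC_cover x
    exact Set.mem_iUnion.mpr ⟨γ⁻¹, ⟨γ • x, hγ, inv_smul_smul γ x⟩, hx⟩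
  calc μ s ≤ ∑' γ : Γ, μ (γ • C ∩ s) := (measure_mono hsub).trans (measure_iUnion_le _)
    _ = μ C := (hs.measure_eq_tsum C).symm

theorem IsFundamentalDomain.integrableOn_of_smul_invariant [TopologicalSpace α]
    [OpensMeasurableSpace α] [NormedAddCommGroup E] [SecondCountableTopologyEither α E]
    [MeasurableConstSMul Γ α] [SMulInvariantMeasure Γ α μ] [Countable Γ]
    [IsFiniteMeasureOnCompacts μ]
    (hs : IsFundamentalDomain Γ s μ) (hC : IsCompact C) (hC_cover : ∀ x, ∃ γ : Γ, γ • x ∈ C)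
    {f : α → E} (hf : Continuous f) (hf_inv : ∀ (γ : Γ) x, f (γ • x) = f x) :
    IntegrableOn f s μ := by
  obtain ⟨M, hM⟩ := hC.exists_bound_of_smul_invariant hC_cover hf hf_inv
  have hμs : μ s ≠ ⊤ :=
    ((hs.measure_le_of_forall_exists_smul_mem hC_cover).trans_lt hC.measure_lt_top).ne
  exact Measure.integrableOn_of_bounded hμs hf.aestronglyMeasurable (.of_forall hM)

end MeasureTheory

end Invariant

namespace MeasureTheory

variable {G E : Type*} [Group G] [MeasurableSpace G] [MeasurableMul G] {μ : Measure G}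
  [μ.IsMulLeftInvariant] [μ.IsMulRightInvariant] {Γ : Subgroup G} [Countable Γ] {F : Set G}
  [NormedAddCommGroup E] [NormedSpace ℝ E]

theorem IsFundamentalDomain.setIntegral_comp_mul_right (hF : IsFundamentalDomain Γ F μ)
    {f : G → E} (hf_inv : ∀ (γ : Γ) x, f (γ • x) = f x) (g : G) :
    ∫ x in F, f (x * g) ∂μ = ∫ x in F, f x ∂μ := by
  have hFg : IsFundamentalDomain Γ (Equiv.mulRight g '' F) μ :=
    hF.image_of_equiv (Equiv.mulRight g) (measurePreserving_mul_right μ g⁻¹).quasiMeasurePreserving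
      (Equiv.refl Γ) fun γ x => mul_assoc (γ : G) x g
  rw [← (measurePreserving_mul_right μ g).setIntegral_image_emb
    (MeasurableEquiv.mulRight g).measurableEmbedding f F]
  exact hFg.setIntegral_eq hF hf_inv

theorem IsFundamentalDomain.setIntegral_le_mul_of_le_mul_comp_mul_right [TopologicalSpace G]
    [OpensMeasurableSpace G] [ContinuousMul G] [IsFiniteMeasureOnCompacts μ]
    (hF : IsFundamentalDomain Γ F μ) {C : Set G} (hC : IsCompact C)
    (hC_cover : ∀ x, ∃ γ : Γ, γ • x ∈ C) {f k : G → ℝ} (hf : Continuous f) (hk : Continuous k)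
    (hf_inv : ∀ (γ : Γ) x, f (γ • x) = f x) (hk_inv : ∀ (γ : Γ) x, k (γ • x) = k x) {c : ℝ} {g : G}
    (hfk : ∀ x, f x ≤ c * k (x * g)) :
    ∫ x in F, f x ∂μ ≤ c * ∫ x in F, k x ∂μ := by
  have hkg_inv (γ : Γ) (x : G) : k (γ • x * g) = k (x * g) := by
    rw [smul_mul_assoc, hk_inv]
  calc ∫ x in F, f x ∂μ ≤ ∫ x in F, c * k (x * g) ∂μ :=
        setIntegral_mono (hF.integrableOn_of_smul_invariant hC hC_cover hf hf_inv)
          (hF.integrableOn_of_smul_invariant hC hC_cover (by fun_prop) fun γ x => by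
            rw [hkg_inv]) hfk
    _ = c * ∫ x in F, k x ∂μ := by
        rw [integral_const_mul, hF.setIntegral_comp_mul_right hk_inv]

end MeasureTheory

namespace IsEquivariantHermitianMetric

variable {G V : Type*} [Group G] [TopologicalSpace G] [NormedAddCommGroup V] [NormedSpace ℂ V]
  {Γ : Subgroup G} {χ : Γ →* (V →ₗ[ℂ] V)ˣ} {h : G → V → V → ℂ}
  (hh : IsEquivariantHermitianMetric Γ χ h)
include hh

theorem continuous_re_apply_self : Continuous fun p : G × V => (h p.1 p.2 p.2).re :=
  Complex.continuous_re.comp <|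
    hh.1.comp (continuous_fst.prodMk (continuous_snd.prodMk continuous_snd))

theorem continuous_re_apply_self_comp {X : Type*} [TopologicalSpace X] {a : X → G} {f : X → V}
    (ha : Continuous a) (hf : Continuous f) : Continuous fun x => (h (a x) (f x) (f x)).re :=
  hh.continuous_re_apply_self.comp (ha.prodMk hf)

theorem re_apply_smul_smul (x : G) (c : ℂ) (v : V) :
    (h x (c • v) (c • v)).re = ‖c‖ ^ 2 * (h x v v).re := by
  obtain ⟨-, -, hsmul, hconj, -⟩ := hh
  have hreal : (starRingEnd ℂ) (h x v v) = h x v v := (hconj x v v).symm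
  have : h x (c • v) (c • v) = (‖c‖ ^ 2 : ℝ) * h x v v := by
    rw [hsmul, hconj, hsmul, map_mul, hreal, ← mul_assoc, Complex.mul_conj,
      Complex.normSq_eq_norm_sq]
  rw [this, Complex.re_ofReal_mul]

theorem re_apply_self_pos (x : G) {v : V} (hv : v ≠ 0) : 0 < (h x v v).re :=
  hh.2.2.2.2.1 x v hv

theorem re_apply_smul_map (γ : Γ) (x : G) (v : V) :
    (h (γ • x) ((χ γ : V →ₗ[ℂ] V) v) ((χ γ : V →ₗ[ℂ] V) v)).re = (h x v v).re := by
  rw [Subgroup.smul_def, smul_eq_mul, hh.2.2.2.2.2]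

theorem re_apply_self_smul {f : G → V} (hf : ∀ (γ : Γ) x, f (γ • x) = (χ γ : V →ₗ[ℂ] V) (f x))
    (γ : Γ) (x : G) : (h (γ • x) (f (γ • x)) (f (γ • x))).re = (h x (f x) (f x)).re := by
  rw [hf, hh.re_apply_smul_map]

theorem exists_continuous_re_apply_self_le_mul [ContinuousMul G] [FiniteDimensional ℂ V]
    {C : Set G} (hC : IsCompact C) (hC_cover : ∀ x, ∃ γ : Γ, γ • x ∈ C) :
    ∃ ψ : G → ℝ, Continuous ψ ∧ ∀ g x v, (h x v v).re ≤ ψ g * (h (x * g) v v).re := by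
  obtain ⟨ψ, hψ, hle⟩ := hC.exists_continuous_forall_le_mul (P := G)
    (Q := fun x v => (h x v v).re) (R := fun g x v => (h (x * g) v v).re)
    hh.continuous_re_apply_self (hh.continuous_re_apply_self_comp (by fun_prop) (by fun_prop))
    hh.re_apply_smul_smul (fun g x => hh.re_apply_smul_smul (x * g))
    (fun g x _ hv => hh.re_apply_self_pos (x * g) hv)
  refine ⟨ψ, hψ, fun g x v => ?_⟩
  obtain ⟨γ, hγ⟩ := hC_cover x
  simpa only [hh.re_apply_smul_map, smul_mul_assoc] using hle g _ hγ ((χ γ : V →ₗ[ℂ] V) v)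

end IsEquivariantHermitianMetric

theorem exists_continuous_bound_for_right_translation_general
    {G V : Type*} [Group G] [TopologicalSpace G] [IsTopologicalGroup G]
    [SecondCountableTopology G]
    [MeasurableSpace G] [BorelSpace G] (μ : Measure G)
    [μ.IsHaarMeasure] [μ.IsMulRightInvariant]
    [NormedAddCommGroup V] [NormedSpace ℂ V] [FiniteDimensional ℂ V]
    (Γ : Subgroup G) [DiscreteTopology Γ]
    (hcocompact : ∃ C : Set G, IsCompact C ∧ ∀ g : G, ∃ γ ∈ Γ, γ * g ∈ C)
    (χ : Γ →* (V →ₗ[ℂ] V)ˣ)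
    (h : G → V → V → ℂ) (hh : IsEquivariantHermitianMetric Γ χ h)
    (F : Set G) (hF : IsFundamentalDomain Γ F μ) :
    ∃ ψ : G → ℝ, Continuous ψ ∧
      ∀ (g : G) (f : G → V), Continuous f →
        (∀ (γ : Γ) (x : G), f ((γ : G) * x) = (χ γ : V →ₗ[ℂ] V) (f x)) →
        (∫ x in F, (h x (f (x * g)) (f (x * g))).re ∂μ) ≤
          ψ g * ∫ x in F, (h x (f x) (f x)).re ∂μ := by
  obtain ⟨C, hC, hC_orbit⟩ := hcocompact
  have hC_cover (x : G) : ∃ γ : Γ, γ • x ∈ C := by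
    obtain ⟨γ, hγ, hγx⟩ := hC_orbit x
    exact ⟨⟨γ, hγ⟩, hγx⟩
  have : Countable Γ := TopologicalSpace.separableSpace_iff_countable.mp inferInstance
  obtain ⟨ψ, hψ, hle⟩ := hh.exists_continuous_re_apply_self_le_mul hC hC_cover
  refine ⟨ψ, hψ, fun g f hf hf_equiv => ?_⟩
  have hfg_equiv (γ : Γ) (x : G) : f (γ • x * g) = (χ γ : V →ₗ[ℂ] V) (f (x * g)) := by
    rw [smul_mul_assoc]
    exact hf_equiv γ _
  exact hF.setIntegral_le_mul_of_le_mul_comp_mul_right hC hC_cover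
    (hh.continuous_re_apply_self_comp continuous_id (by fun_prop))
    (hh.continuous_re_apply_self_comp continuous_id hf)
    (hh.re_apply_self_smul hfg_equiv) (hh.re_apply_self_smul hf_equiv) fun x => hle g x _

/-- There is a continuous `ψ : G → ℝ` such that for every `g ∈ G` and
every continuous `Γ`-equivariant `f : G → V`,
`∫_F h x (f (x g), f (x g)) dμ x ≤ ψ g * ∫_F h x (f x, f x) dμ x`,
where `F` is a measurable fundamental domain for the left translation action of `Γ`. -/
theorem exists_continuous_bound_for_right_translation
    {G V : Type*} [Group G] [TopologicalSpace G] [IsTopologicalGroup G]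
    [LocallyCompactSpace G] [T2Space G] [SecondCountableTopology G]
    [MeasurableSpace G] [BorelSpace G] (μ : Measure G)
    [μ.IsHaarMeasure] [μ.IsMulRightInvariant]
    [NormedAddCommGroup V] [NormedSpace ℂ V] [FiniteDimensional ℂ V] [Nontrivial V]
    (Γ : Subgroup G) [DiscreteTopology Γ]
    (hcocompact : ∃ C : Set G, IsCompact C ∧ ∀ g : G, ∃ γ ∈ Γ, γ * g ∈ C)
    (χ : Γ →* (V →ₗ[ℂ] V)ˣ)
    (h : G → V → V → ℂ) (hh : IsEquivariantHermitianMetric Γ χ h)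
    (F : Set G) (hF : IsFundamentalDomain Γ F μ) :
    ∃ ψ : G → ℝ, Continuous ψ ∧
      ∀ (g : G) (f : G → V), Continuous f →
        (∀ (γ : Γ) (x : G), f ((γ : G) * x) = (χ γ : V →ₗ[ℂ] V) (f x)) →
        (∫ x in F, (h x (f (x * g)) (f (x * g))).re ∂μ) ≤
          ψ g * ∫ x in F, (h x (f x) (f x)).re ∂μ :=
  exists_continuous_bound_for_right_translation_general μ Γ hcocompact χ h hh F hF
end

section
/- Let f : G → ℂ be continuous with compact support and let h : G → ℝ be continuous, compactly supported, with h ≥ 0 and Σ_{γ ∈ Γ} h(γx) = 1 for all x ∈ G. Let F ⊆ G be a measurable fundamental domain with compact closure for the left translation action of Γ on G. Then the set { γ ∈ Γ : there exists x ∈ supp(h) with f(x⁻¹ γ x) ≠ 0 } is finite, the function x ↦ Σ_{γ ∈ Γ} f(x⁻¹ γ x) tr χ(γ) is well defined, invariant under left translation by Γ, and continuous, and ∫_F ( Σ_{γ ∈ Γ} f(x⁻¹ γ x) tr χ(γ) ) dμ(x) = Σ_{γ ∈ Γ} ∫_G h(x) f(x⁻¹ γ x) tr χ(γ) dμ(x),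 with absolutely convergent sums and integrals on both sides. -/
/-!
A discrete subgroup `Γ` is closed, so it meets every compact set in finitely many points. Applied
to the compact sets `C · supp f · C⁻¹`, this makes `Φ x = ∑_γ f (x⁻¹ γ x) tr χ(γ)` a locally
finite sum of continuous functions; `Φ` is `Γ`-invariant because `tr ∘ χ` is a class function.
Unfolding `∫_G h Φ` over the fundamental domain and using left invariance of `μ` and `Γ`-invariance
of `Φ` gives `∫_F (∑_δ h (δ x)) Φ x = ∫_F Φ`. On `supp h` only finitely many `γ` contribute to
`Φ`, so the sum over `γ` commutes with `∫_G`.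
-/

open MeasureTheory

section DiscreteSubgroup

variable {G : Type*} [Group G] [TopologicalSpace G] [IsTopologicalGroup G] [T2Space G]
  (Γ : Subgroup G) [DiscreteTopology Γ]

theorem Subgroup.finite_setOf_coe_mem_of_isCompact {K : Set G} (hK : IsCompact K) :
    {γ : Γ | (γ : G) ∈ K}.Finite :=
  (Subgroup.isClosed_of_discrete.isClosedEmbedding_subtypeVal.isCompact_preimage
    hK).finite_of_discrete

theorem Subgroup.finite_setOf_exists_conj_ne_zero {M : Type*} [Zero M] {f : G → M}
    (hf : HasCompactSupport f) {C : Set G} (hC : IsCompact C) :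
    {γ : Γ | ∃ x ∈ C, f (x⁻¹ * γ * x) ≠ 0}.Finite := by
  have hK : IsCompact ((fun p : G × G => p.1 * p.2 * p.1⁻¹) '' (C ×ˢ tsupport f)) :=
    (hC.prod hf).image (by fun_prop)
  refine (Γ.finite_setOf_coe_mem_of_isCompact hK).subset ?_
  rintro γ ⟨x, hx, hfx⟩
  exact ⟨(x, x⁻¹ * γ * x), ⟨hx, subset_tsupport f hfx⟩, by group⟩

theorem Subgroup.finite_setOf_exists_mul_ne_zero {M : Type*} [Zero M] {h : G → M}
    (hh : HasCompactSupport h) {C : Set G} (hC : IsCompact C) :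
    {δ : Γ | ∃ x ∈ C, h (δ * x) ≠ 0}.Finite := by
  have hK : IsCompact ((fun p : G × G => p.1 * p.2⁻¹) '' (tsupport h ×ˢ C)) :=
    (hh.prod hC).image (by fun_prop)
  refine (Γ.finite_setOf_coe_mem_of_isCompact hK).subset ?_
  rintro δ ⟨x, hx, hne⟩
  exact ⟨(δ * x, x), ⟨subset_tsupport h hne, hx⟩, by group⟩

end DiscreteSubgroup

theorem LinearMap.trace_monoidHom_conj {R M Γ : Type*} [CommRing R] [AddCommGroup M]
    [Module R M] [Group Γ] (χ : Γ →* (M →ₗ[R] M)ˣ) (g γ : Γ) :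
    trace R M (χ (g * γ * g⁻¹) : M →ₗ[R] M) = trace R M (χ γ : M →ₗ[R] M) := by
  rw [map_mul, map_mul, map_inv, Units.val_mul, Units.val_mul, trace_conj]

section IntegrableOfCompact

variable {X : Type*} [TopologicalSpace X] [MeasurableSpace X] [OpensMeasurableSpace X]
  {μ : Measure X} [IsFiniteMeasureOnCompacts μ]

theorem Continuous.integrableOn_of_isCompact_closure [T2Space X] {E : Type*}
    [NormedAddCommGroup E] {g : X → E} (hg : Continuous g) {s : Set X} (hs : IsCompact (closure s)) :
    IntegrableOn g s μ :=
  (hg.continuousOn.integrableOn_compact hs).mono_set subset_closure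

theorem Continuous.integrable_ofReal_mul {h : X → ℝ} (hh : Continuous h)
    (hhs : HasCompactSupport h) {g : X → ℂ} (hg : Continuous g) :
    Integrable (fun x => (h x : ℂ) * g x) μ :=
  (by fun_prop : Continuous fun x => (h x : ℂ) * g x).integrable_of_hasCompactSupport
    (hhs.comp_left Complex.ofReal_zero).mul_right

end IntegrableOfCompact

/-- The kernel `K(x, y) = ∑_{γ ∈ Γ} f (x⁻¹ γ y) a(γ)` on the diagonal `x = y`. -/
noncomputable def diagonalKernel {G : Type*} [Group G] (Γ : Subgroup G) (f : G → ℂ)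
    (a : Γ → ℂ) (x : G) : ℂ :=
  ∑' γ : Γ, f (x⁻¹ * γ * x) * a γ

theorem diagonalKernel_mul_left {G : Type*} [Group G] {Γ : Subgroup G} {f : G → ℂ} {a : Γ → ℂ}
    (ha : ∀ g γ, a (g * γ * g⁻¹) = a γ) (γ₀ : Γ) (x : G) :
    diagonalKernel Γ f a (γ₀ * x) = diagonalKernel Γ f a x := by
  refine Eq.trans (tsum_congr fun γ => ?_) ((MulAut.conj γ₀⁻¹).toEquiv.tsum_eq _)
  simp only [MulEquiv.toEquiv_eq_coe, MulEquiv.coe_toEquiv, MulAut.conj_apply, ha]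
  congr 2
  push_cast
  group

section DiagonalKernel

variable {G : Type*} [Group G] [TopologicalSpace G] [IsTopologicalGroup G] [T2Space G]
  {Γ : Subgroup G} [DiscreteTopology Γ] {f : G → ℂ} (a : Γ → ℂ) {h : G → ℝ}

theorem diagonalKernel_eq_sum (hfs : HasCompactSupport f) {C : Set G} (hC : IsCompact C)
    {x : G} (hx : x ∈ C) :
    diagonalKernel Γ f a x =
      ∑ γ ∈ (Γ.finite_setOf_exists_conj_ne_zero hfs hC).toFinset, f (x⁻¹ * γ * x) * a γ := by
  refine tsum_eq_sum fun γ hγ => ?_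
  have hfγ : f (x⁻¹ * γ * x) = 0 := by
    by_contra hne
    exact hγ ((Set.Finite.mem_toFinset _).2 ⟨x, hx, hne⟩)
  rw [hfγ, zero_mul]

theorem continuous_diagonalKernel [LocallyCompactSpace G] (hf : Continuous f)
    (hfs : HasCompactSupport f) : Continuous (diagonalKernel Γ f a) := by
  refine continuous_iff_continuousAt.2 fun x₀ => ?_
  obtain ⟨K, hK, hKx₀⟩ := exists_compact_mem_nhds x₀
  refine ContinuousAt.congr (f := fun x =>
    ∑ γ ∈ (Γ.finite_setOf_exists_conj_ne_zero hfs hK).toFinset, f (x⁻¹ * γ * x) * a γ)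
    (by fun_prop) ?_
  filter_upwards [hKx₀] with x hx using (diagonalKernel_eq_sum a hfs hK hx).symm

theorem ofReal_mul_conj_eq_zero (hfs : HasCompactSupport f) (hhs : HasCompactSupport h) {γ : Γ}
    (hγ : γ ∉ (Γ.finite_setOf_exists_conj_ne_zero hfs hhs).toFinset) (x : G) :
    (h x : ℂ) * (f (x⁻¹ * γ * x) * a γ) = 0 := by
  by_cases hx : x ∈ tsupport h
  · have hfγ : f (x⁻¹ * γ * x) = 0 := by
      by_contra hne
      exact hγ ((Set.Finite.mem_toFinset _).2 ⟨x, hx, hne⟩)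
    rw [hfγ, zero_mul, mul_zero]
  · rw [image_eq_zero_of_notMem_tsupport hx, Complex.ofReal_zero, zero_mul]

end DiagonalKernel

section Unfolding

variable {G : Type*} [Group G] [TopologicalSpace G] [IsTopologicalGroup G] [T2Space G]
  [MeasurableSpace G] {μ : Measure G}
  {Γ : Subgroup G} [DiscreteTopology Γ]

theorem MeasureTheory.IsFundamentalDomain.setIntegral_eq_integral_ofReal_mul [BorelSpace G]
    [IsFiniteMeasureOnCompacts μ] [Countable Γ] [μ.IsMulLeftInvariant] {F : Set G}
    (hF : IsFundamentalDomain Γ F μ) (hFc : IsCompact (closure F)) {h : G → ℝ} (hh : Continuous h) (hhs : HasCompactSupport h)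
    (hsum : ∀ x, ∑' δ : Γ, h (δ * x) = 1) {Φ : G → ℂ} (hΦ : Continuous Φ)
    (hΦΓ : ∀ (δ : Γ) x, Φ (δ * x) = Φ x) :
    ∫ x in F, Φ x ∂μ = ∫ x, (h x : ℂ) * Φ x ∂μ := by
  set T := (Γ.finite_setOf_exists_mul_ne_zero hhs hFc).toFinset
  have hT : ∀ x ∈ F, ∀ δ ∉ T, h (δ * x) = 0 := fun x hx δ hδ => by
    by_contra hne
    exact hδ ((Set.Finite.mem_toFinset _).2 ⟨x, subset_closure hx, hne⟩)
  have hsumT : ∀ x ∈ F, ∑ δ ∈ T, h (δ * x) = 1 := fun x hx =>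
    (tsum_eq_sum (hT x hx)).symm.trans (hsum x)
  symm
  calc ∫ x, (h x : ℂ) * Φ x ∂μ
      = ∑' δ : Γ, ∫ x in F, (h (δ * x) : ℂ) * Φ x ∂μ := by
        rw [hF.integral_eq_tsum'' _ (hh.integrable_ofReal_mul hhs hΦ)]
        exact tsum_congr fun δ => congrArg _ (funext fun x => congrArg _ (hΦΓ δ x))
    _ = ∑ δ ∈ T, ∫ x in F, (h (δ * x) : ℂ) * Φ x ∂μ :=
        tsum_eq_sum fun δ hδ => setIntegral_eq_zero_of_forall_eq_zero fun x hx => by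
          rw [hT x hx δ hδ, Complex.ofReal_zero, zero_mul]
    _ = ∫ x in F, ∑ δ ∈ T, (h (δ * x) : ℂ) * Φ x ∂μ :=
        (integral_finsetSum _ fun δ _ =>
          (by fun_prop : Continuous _).integrableOn_of_isCompact_closure hFc).symm
    _ = ∫ x in F, Φ x ∂μ := setIntegral_congr_fun₀ hF.nullMeasurableSet fun x hx => by
        rw [← Finset.sum_mul, ← Complex.ofReal_sum, hsumT x hx, Complex.ofReal_one, one_mul]

variable {f : G → ℂ} (a : Γ → ℂ) {h : G → ℝ}

theorem summable_integral_norm_ofReal_mul_conj (hfs : HasCompactSupport f)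
    (hhs : HasCompactSupport h) :
    Summable fun γ : Γ => ∫ x, ‖(h x : ℂ) * (f (x⁻¹ * γ * x) * a γ)‖ ∂μ :=
  summable_of_ne_finset_zero (s := (Γ.finite_setOf_exists_conj_ne_zero hfs hhs).toFinset)
    fun γ hγ => by simp only [ofReal_mul_conj_eq_zero a hfs hhs hγ, norm_zero, integral_zero]

theorem integral_ofReal_mul_diagonalKernel [BorelSpace G] [IsFiniteMeasureOnCompacts μ]
    (hf : Continuous f) (hfs : HasCompactSupport f)
    (hh : Continuous h) (hhs : HasCompactSupport h) :
    ∫ x, (h x : ℂ) * diagonalKernel Γ f a x ∂μ =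
      ∑' γ : Γ, ∫ x, (h x : ℂ) * (f (x⁻¹ * γ * x) * a γ) ∂μ := by
  set T := (Γ.finite_setOf_exists_conj_ne_zero hfs hhs).toFinset
  have hpoint : ∀ x, (h x : ℂ) * diagonalKernel Γ f a x =
      ∑ γ ∈ T, (h x : ℂ) * (f (x⁻¹ * γ * x) * a γ) := fun x => by
    rw [diagonalKernel, ← tsum_mul_left]
    exact tsum_eq_sum fun γ hγ => ofReal_mul_conj_eq_zero a hfs hhs hγ x
  rw [funext hpoint, integral_finsetSum _ fun γ _ => hh.integrable_ofReal_mul hhs (by fun_prop)]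
  exact (tsum_eq_sum fun γ hγ => by
    simp only [ofReal_mul_conj_eq_zero a hfs hhs hγ, integral_zero]).symm

end Unfolding

theorem integral_of_diagonal_kernel_unfolds_general
    {G V : Type*} [Group G] [TopologicalSpace G] [IsTopologicalGroup G]
    [LocallyCompactSpace G] [T2Space G] [SecondCountableTopology G]
    [MeasurableSpace G] [BorelSpace G] (μ : Measure G)
    [μ.IsHaarMeasure]
    [NormedAddCommGroup V] [NormedSpace ℂ V]
    (Γ : Subgroup G) [DiscreteTopology Γ]
    (χ : Γ →* (V →ₗ[ℂ] V)ˣ)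
    (f : G → ℂ) (hf : Continuous f) (hfsupp : HasCompactSupport f)
    (h : G → ℝ) (hh : Continuous h) (hhsupp : HasCompactSupport h)
    (hhsum : ∀ x : G, {γ : Γ | h ((γ : G) * x) ≠ 0}.Finite ∧
      ∑' γ : Γ, h ((γ : G) * x) = 1)
    (F : Set G) (hF : IsFundamentalDomain Γ F μ) (hFc : IsCompact (closure F)) :
    {γ : Γ | ∃ x ∈ tsupport h, f (x⁻¹ * (γ : G) * x) ≠ 0}.Finite ∧
    (∀ x : G, {γ : Γ | f (x⁻¹ * (γ : G) * x) ≠ 0}.Finite) ∧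
    (∀ (γ₀ : Γ) (x : G),
      (∑' γ : Γ, f (((γ₀ : G) * x)⁻¹ * (γ : G) * ((γ₀ : G) * x)) *
          LinearMap.trace ℂ V (χ γ : V →ₗ[ℂ] V)) =
        ∑' γ : Γ, f (x⁻¹ * (γ : G) * x) * LinearMap.trace ℂ V (χ γ : V →ₗ[ℂ] V)) ∧
    Continuous (fun x : G =>
      ∑' γ : Γ, f (x⁻¹ * (γ : G) * x) * LinearMap.trace ℂ V (χ γ : V →ₗ[ℂ] V)) ∧
    IntegrableOn (fun x : G =>
      ∑' γ : Γ, f (x⁻¹ * (γ : G) * x) * LinearMap.trace ℂ V (χ γ : V →ₗ[ℂ] V)) F μ ∧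
    (∀ γ : Γ, Integrable (fun x : G =>
      (h x : ℂ) * (f (x⁻¹ * (γ : G) * x) * LinearMap.trace ℂ V (χ γ : V →ₗ[ℂ] V))) μ) ∧
    Summable (fun γ : Γ => ∫ x, norm
      ((h x : ℂ) * (f (x⁻¹ * (γ : G) * x) * LinearMap.trace ℂ V (χ γ : V →ₗ[ℂ] V))) ∂μ) ∧
    (∫ x in F,
        (∑' γ : Γ, f (x⁻¹ * (γ : G) * x) * LinearMap.trace ℂ V (χ γ : V →ₗ[ℂ] V)) ∂μ) =
      ∑' γ : Γ, ∫ x,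
        (h x : ℂ) * (f (x⁻¹ * (γ : G) * x) * LinearMap.trace ℂ V (χ γ : V →ₗ[ℂ] V)) ∂μ := by
  have : Countable Γ := TopologicalSpace.separableSpace_iff_countable.mp inferInstance
  set a : Γ → ℂ := fun γ => LinearMap.trace ℂ V (χ γ : V →ₗ[ℂ] V)
  have hinv : ∀ (γ₀ : Γ) x, diagonalKernel Γ f a (γ₀ * x) = diagonalKernel Γ f a x :=
    diagonalKernel_mul_left (LinearMap.trace_monoidHom_conj χ)
  have hcont : Continuous (diagonalKernel Γ f a) := continuous_diagonalKernel a hf hfsupp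
  refine ⟨Γ.finite_setOf_exists_conj_ne_zero hfsupp hhsupp, fun x => ?_, hinv, hcont,
    hcont.integrableOn_of_isCompact_closure hFc,
    fun γ => hh.integrable_ofReal_mul hhsupp (by fun_prop),
    summable_integral_norm_ofReal_mul_conj a hfsupp hhsupp, ?_⟩
  · simpa using Γ.finite_setOf_exists_conj_ne_zero hfsupp (isCompact_singleton (x := x))
  · exact (hF.setIntegral_eq_integral_ofReal_mul hFc hh hhsupp (fun x => (hhsum x).2) hcont
      hinv).trans (integral_ofReal_mul_diagonalKernel a hf hfsupp hh hhsupp)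

/-- Unfolding step in the trace formula: with a partition of unity
`h` for `Γ\G` and a fundamental domain `F` with compact closure, the diagonal sum
`x ↦ Σ_{γ ∈ Γ} f (x⁻¹ γ x) tr χ(γ)` is a well-defined, `Γ`-invariant, continuous
function, and its integral over `F` unfolds into
`Σ_{γ ∈ Γ} ∫_G h x f (x⁻¹ γ x) tr χ(γ) dμ x`, all sums and integrals being
absolutely convergent. -/
theorem integral_of_diagonal_kernel_unfolds
    {G V : Type*} [Group G] [TopologicalSpace G] [IsTopologicalGroup G]
    [LocallyCompactSpace G] [T2Space G] [SecondCountableTopology G]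
    [MeasurableSpace G] [BorelSpace G] (μ : Measure G)
    [μ.IsHaarMeasure] [μ.IsMulRightInvariant]
    [NormedAddCommGroup V] [NormedSpace ℂ V] [FiniteDimensional ℂ V] [Nontrivial V]
    (Γ : Subgroup G) [DiscreteTopology Γ]
    (hcocompact : ∃ C : Set G, IsCompact C ∧ ∀ g : G, ∃ γ ∈ Γ, γ * g ∈ C)
    (χ : Γ →* (V →ₗ[ℂ] V)ˣ)
    (f : G → ℂ) (hf : Continuous f) (hfsupp : HasCompactSupport f)
    (h : G → ℝ) (hh : Continuous h) (hhsupp : HasCompactSupport h)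
    (hhnonneg : ∀ x, 0 ≤ h x)
    (hhsum : ∀ x : G, {γ : Γ | h ((γ : G) * x) ≠ 0}.Finite ∧
      ∑' γ : Γ, h ((γ : G) * x) = 1)
    (F : Set G) (hF : IsFundamentalDomain Γ F μ) (hFc : IsCompact (closure F)) :
    {γ : Γ | ∃ x ∈ tsupport h, f (x⁻¹ * (γ : G) * x) ≠ 0}.Finite ∧
    (∀ x : G, {γ : Γ | f (x⁻¹ * (γ : G) * x) ≠ 0}.Finite) ∧
    (∀ (γ₀ : Γ) (x : G),
      (∑' γ : Γ, f (((γ₀ : G) * x)⁻¹ * (γ : G) * ((γ₀ : G) * x)) *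
          LinearMap.trace ℂ V (χ γ : V →ₗ[ℂ] V)) =
        ∑' γ : Γ, f (x⁻¹ * (γ : G) * x) * LinearMap.trace ℂ V (χ γ : V →ₗ[ℂ] V)) ∧
    Continuous (fun x : G =>
      ∑' γ : Γ, f (x⁻¹ * (γ : G) * x) * LinearMap.trace ℂ V (χ γ : V →ₗ[ℂ] V)) ∧
    IntegrableOn (fun x : G =>
      ∑' γ : Γ, f (x⁻¹ * (γ : G) * x) * LinearMap.trace ℂ V (χ γ : V →ₗ[ℂ] V)) F μ ∧
    (∀ γ : Γ, Integrable (fun x : G =>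
      (h x : ℂ) * (f (x⁻¹ * (γ : G) * x) * LinearMap.trace ℂ V (χ γ : V →ₗ[ℂ] V))) μ) ∧
    Summable (fun γ : Γ => ∫ x, norm
      ((h x : ℂ) * (f (x⁻¹ * (γ : G) * x) * LinearMap.trace ℂ V (χ γ : V →ₗ[ℂ] V))) ∂μ) ∧
    (∫ x in F,
        (∑' γ : Γ, f (x⁻¹ * (γ : G) * x) * LinearMap.trace ℂ V (χ γ : V →ₗ[ℂ] V)) ∂μ) =
      ∑' γ : Γ, ∫ x,
        (h x : ℂ) * (f (x⁻¹ * (γ : G) * x) * LinearMap.trace ℂ V (χ γ : V →ₗ[ℂ] V)) ∂μ :=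
  integral_of_diagonal_kernel_unfolds_general μ Γ χ f hf hfsupp h hh hhsupp hhsum F hF hFc
end
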